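/- arXiv:1101.4791 — 2 statements merged into one kernel-verified Lean document; each statement's English description precedes it below -/
import Mathlib

section
/- The sum operation ⊕ on fuzzy left ideals of a Γ-semiring is associative: (μ₁⊕μ₂)⊕μ₃ = μ₁⊕(μ₂⊕μ₃); moreover, for each x ∈ S, ((μ₁⊕μ₂)⊕μ₃)(x) = sup{min(μ₁(p),μ₂(q),μ₃(v)) : x = p+q+v}. -/
open Classical

/-- A Γ-semiring: additive commutative monoids `S` and `G` with a triadditive,
associative product `tmul : S → G → S → S` for which zero is absorbing. -/
class GammaSemiring (S : Type*) (G : Type*) [AddCommMonoid S] [AddCommMonoid G] where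
  tmul : S → G → S → S
  add_tmul : ∀ (a b : S) (γ : G) (c : S), tmul (a + b) γ c = tmul a γ c + tmul b γ c
  tmul_add : ∀ (a : S) (γ : G) (b c : S), tmul a γ (b + c) = tmul a γ b + tmul a γ c
  tmul_gadd : ∀ (a : S) (γ δ : G) (b : S), tmul a (γ + δ) b = tmul a γ b + tmul a δ b
  tmul_assoc : ∀ (a : S) (γ : G) (b : S) (δ : G) (c : S),
      tmul a γ (tmul b δ c) = tmul (tmul a γ b) δ c
  zero_tmul : ∀ (γ : G) (x : S), tmul 0 γ x = 0
  tmul_zero : ∀ (x : S) (γ : G), tmul x γ 0 = 0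
  tmul_gzero : ∀ (x y : S), tmul x 0 y = 0

/-- μ is a fuzzy left ideal: `[0,1]`-valued, `μ 0 = 1`, superadditive under `min`,
and `μ (xγy) ≥ μ y`. -/
def IsFuzzyLeftIdeal (S G : Type*) [AddCommMonoid S] [AddCommMonoid G]
    [GammaSemiring S G] (μ : S → ℝ) : Prop :=
  (∀ x, μ x ∈ Set.Icc (0 : ℝ) 1) ∧ μ 0 = 1 ∧
  (∀ x y, min (μ x) (μ y) ≤ μ (x + y)) ∧
  (∀ (x : S) (γ : G) (y : S), μ y ≤ μ (GammaSemiring.tmul x γ y))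

/-- μ is a fuzzy right ideal. -/
def IsFuzzyRightIdeal (S G : Type*) [AddCommMonoid S] [AddCommMonoid G]
    [GammaSemiring S G] (μ : S → ℝ) : Prop :=
  (∀ x, μ x ∈ Set.Icc (0 : ℝ) 1) ∧ μ 0 = 1 ∧
  (∀ x y, min (μ x) (μ y) ≤ μ (x + y)) ∧
  (∀ (x : S) (γ : G) (y : S), μ x ≤ μ (GammaSemiring.tmul x γ y))

/-- μ is a fuzzy (two-sided) ideal. -/
def IsFuzzyIdeal (S G : Type*) [AddCommMonoid S] [AddCommMonoid G]
    [GammaSemiring S G] (μ : S → ℝ) : Prop :=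
  (∀ x, μ x ∈ Set.Icc (0 : ℝ) 1) ∧ μ 0 = 1 ∧
  (∀ x y, min (μ x) (μ y) ≤ μ (x + y)) ∧
  (∀ (x : S) (γ : G) (y : S), max (μ x) (μ y) ≤ μ (GammaSemiring.tmul x γ y))

/-- The sum `μ ⊕ ν` of fuzzy subsets: `(μ ⊕ ν)(x) = sup { min (μ u) (ν v) : x = u + v }`. -/
noncomputable def fSum {S : Type*} [AddCommMonoid S] (μ ν : S → ℝ) : S → ℝ := fun x =>
  sSup {r : ℝ | ∃ u v : S, x = u + v ∧ r = min (μ u) (ν v)}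

/-- The product `μ Γ ν`: `(μ Γ ν)(x) = sup { min (μ u) (ν v) : x = uγv }`
(`sSup ∅ = 0` in `ℝ`, matching the convention that it is `0` with no representation). -/
noncomputable def fProd (S G : Type*) [AddCommMonoid S] [AddCommMonoid G]
    [GammaSemiring S G] (μ ν : S → ℝ) : S → ℝ := fun x =>
  sSup {r : ℝ | ∃ (u : S) (γ : G) (v : S),
    x = GammaSemiring.tmul u γ v ∧ r = min (μ u) (ν v)}

/-- The composition `μ ∘ ν`:
`(μ ∘ ν)(x) = sup { min_{1 ≤ i ≤ n} min (μ uᵢ) (ν vᵢ) : x = Σᵢ uᵢγᵢvᵢ, n ≥ 1 }`. -/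
noncomputable def fComp (S G : Type*) [AddCommMonoid S] [AddCommMonoid G]
    [GammaSemiring S G] (μ ν : S → ℝ) : S → ℝ := fun x =>
  sSup {r : ℝ | ∃ (n : ℕ) (u v : Fin (n + 1) → S) (γ : Fin (n + 1) → G),
    x = ∑ i, GammaSemiring.tmul (u i) (γ i) (v i) ∧
    r = Finset.univ.inf' Finset.univ_nonempty (fun i => min (μ (u i)) (ν (v i)))}

/-!
Both bracketings of `μ₁ ⊕ μ₂ ⊕ μ₃` equal the supremum of `min (μ₁ p) (min (μ₂ q) (μ₃ v))`
over all decompositions `x = p + q + v`: since `min · c` is monotone and continuous, it commutes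
with suprema of bounded sets, so the inner supremum can be pulled out of the outer one. The upper
bound `1` on the values keeps every supremum away from the junk value `sSup = 0` of unbounded sets
of reals.
-/

lemma min_csSup_le {α : Type*} [ConditionallyCompleteLinearOrder α] [TopologicalSpace α]
    [OrderTopology α] {A : Set α} (hA : A.Nonempty) (hb : BddAbove A) {c s : α}
    (h : ∀ a ∈ A, min a c ≤ s) : min (sSup A) c ≤ s := by
  have hmin : min (sSup A) c = sSup ((min · c) '' A) :=
    Monotone.map_csSup_of_continuousAt (by fun_prop) (fun _ _ hab => min_le_min_right c hab) hA hb
  rw [hmin]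
  exact csSup_le (hA.image _) (Set.forall_mem_image.2 h)

section FuzzySum

variable {S : Type*} [AddCommMonoid S] {μ ν : S → ℝ} {x : S} {c : ℝ}

lemma fSum_set_nonempty (μ ν : S → ℝ) (x : S) :
    {r : ℝ | ∃ u v : S, x = u + v ∧ r = min (μ u) (ν v)}.Nonempty :=
  ⟨min (μ x) (ν 0), x, 0, (add_zero x).symm, rfl⟩

lemma bddAbove_fSum_set (hν : ∀ y, ν y ≤ c) (x : S) :
    BddAbove {r : ℝ | ∃ u v : S, x = u + v ∧ r = min (μ u) (ν v)} :=
  ⟨c, by rintro _ ⟨u, v, -, rfl⟩; exact (min_le_right _ _).trans (hν v)⟩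

lemma le_fSum (hν : ∀ y, ν y ≤ c) {u v : S} (h : x = u + v) :
    min (μ u) (ν v) ≤ fSum μ ν x :=
  le_csSup (bddAbove_fSum_set hν x) ⟨u, v, h, rfl⟩

lemma fSum_le {s : ℝ} (h : ∀ u v, x = u + v → min (μ u) (ν v) ≤ s) : fSum μ ν x ≤ s :=
  csSup_le (fSum_set_nonempty μ ν x) (by rintro _ ⟨u, v, hx, rfl⟩; exact h u v hx)

lemma fSum_le_of_le (hν : ∀ y, ν y ≤ c) (x : S) : fSum μ ν x ≤ c :=
  fSum_le fun _ v _ => (min_le_right _ _).trans (hν v)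

lemma min_fSum_le (hν : ∀ y, ν y ≤ c) {d s : ℝ}
    (h : ∀ u v, x = u + v → min (min (μ u) (ν v)) d ≤ s) : min (fSum μ ν x) d ≤ s :=
  min_csSup_le (fSum_set_nonempty μ ν x) (bddAbove_fSum_set hν x)
    (by rintro _ ⟨u, v, hx, rfl⟩; exact h u v hx)

noncomputable def fSum₃ (μ₁ μ₂ μ₃ : S → ℝ) : S → ℝ := fun x =>
  sSup {r : ℝ | ∃ p q v : S, x = p + q + v ∧ r = min (μ₁ p) (min (μ₂ q) (μ₃ v))}

variable {μ₁ μ₂ μ₃ : S → ℝ}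

lemma le_fSum₃ (hμ₃ : ∀ y, μ₃ y ≤ c) {p q v : S} (h : x = p + q + v) :
    min (μ₁ p) (min (μ₂ q) (μ₃ v)) ≤ fSum₃ μ₁ μ₂ μ₃ x := by
  refine le_csSup ⟨c, ?_⟩ ⟨p, q, v, h, rfl⟩
  rintro _ ⟨p, q, v, -, rfl⟩
  exact (min_le_right _ _).trans ((min_le_right _ _).trans (hμ₃ v))

lemma fSum₃_le {s : ℝ} (h : ∀ p q v, x = p + q + v → min (μ₁ p) (min (μ₂ q) (μ₃ v)) ≤ s) :
    fSum₃ μ₁ μ₂ μ₃ x ≤ s := by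
  refine csSup_le ⟨_, x, 0, 0, by rw [add_zero, add_zero], rfl⟩ ?_
  rintro _ ⟨p, q, v, hx, rfl⟩
  exact h p q v hx

lemma fSum_fSum_eq_fSum₃ {c₂ c₃ : ℝ} (hμ₂ : ∀ y, μ₂ y ≤ c₂) (hμ₃ : ∀ y, μ₃ y ≤ c₃) (x : S) :
    fSum (fSum μ₁ μ₂) μ₃ x = fSum₃ μ₁ μ₂ μ₃ x := by
  apply le_antisymm
  · refine fSum_le fun u v hx => min_fSum_le hμ₂ fun p q hu => ?_
    rw [min_assoc]
    exact le_fSum₃ hμ₃ (by rw [hx, hu])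
  · refine fSum₃_le fun p q v hx => ?_
    calc min (μ₁ p) (min (μ₂ q) (μ₃ v))
        = min (min (μ₁ p) (μ₂ q)) (μ₃ v) := (min_assoc _ _ _).symm
      _ ≤ min (fSum μ₁ μ₂ (p + q)) (μ₃ v) := min_le_min_right _ (le_fSum hμ₂ rfl)
      _ ≤ fSum (fSum μ₁ μ₂) μ₃ x := le_fSum hμ₃ hx

lemma fSum_fSum_right_eq_fSum₃ (hμ₃ : ∀ y, μ₃ y ≤ c) (x : S) :
    fSum μ₁ (fSum μ₂ μ₃) x = fSum₃ μ₁ μ₂ μ₃ x := by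
  apply le_antisymm
  · refine fSum_le fun u v hx => ?_
    rw [min_comm]
    refine min_fSum_le hμ₃ fun q w hv => ?_
    rw [min_comm]
    exact le_fSum₃ hμ₃ (by rw [hx, hv, add_assoc])
  · refine fSum₃_le fun p q v hx => ?_
    calc min (μ₁ p) (min (μ₂ q) (μ₃ v))
        ≤ min (μ₁ p) (fSum μ₂ μ₃ (q + v)) := min_le_min_left _ (le_fSum hμ₃ rfl)
      _ ≤ fSum μ₁ (fSum μ₂ μ₃) x := le_fSum (fSum_le_of_le hμ₃) (by rw [hx, add_assoc])

end FuzzySum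

theorem fSum_assoc_general {S G : Type*} [AddCommMonoid S] [AddCommMonoid G]
    [GammaSemiring S G] (μ₁ μ₂ μ₃ : S → ℝ)
    (h₂ : IsFuzzyLeftIdeal S G μ₂)
    (h₃ : IsFuzzyLeftIdeal S G μ₃) :
    fSum (fSum μ₁ μ₂) μ₃ = fSum μ₁ (fSum μ₂ μ₃) ∧
    ∀ x : S, fSum (fSum μ₁ μ₂) μ₃ x =
      sSup {r : ℝ | ∃ p q v : S, x = p + q + v ∧
        r = min (μ₁ p) (min (μ₂ q) (μ₃ v))} := by
  have hμ₂ : ∀ y, μ₂ y ≤ 1 := fun y => (h₂.1 y).2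
  have hμ₃ : ∀ y, μ₃ y ≤ 1 := fun y => (h₃.1 y).2
  have hleft := fSum_fSum_eq_fSum₃ (μ₁ := μ₁) hμ₂ hμ₃
  exact ⟨funext fun x => (hleft x).trans (fSum_fSum_right_eq_fSum₃ hμ₃ x).symm, hleft⟩

theorem fSum_assoc {S G : Type*} [AddCommMonoid S] [AddCommMonoid G]
    [GammaSemiring S G] (μ₁ μ₂ μ₃ : S → ℝ)
    (h₁ : IsFuzzyLeftIdeal S G μ₁) (h₂ : IsFuzzyLeftIdeal S G μ₂)
    (h₃ : IsFuzzyLeftIdeal S G μ₃) :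
    fSum (fSum μ₁ μ₂) μ₃ = fSum μ₁ (fSum μ₂ μ₃) ∧
    ∀ x : S, fSum (fSum μ₁ μ₂) μ₃ x =
      sSup {r : ℝ | ∃ p q v : S, x = p + q + v ∧
        r = min (μ₁ p) (min (μ₂ q) (μ₃ v))} :=
  fSum_assoc_general μ₁ μ₂ μ₃ h₂ h₃
end

section
/- Composition distributes over sum for fuzzy left ideals of a Γ-semiring: μ₁∘(μ₂⊕μ₃) = (μ₁∘μ₂)⊕(μ₁∘μ₃) and (μ₂⊕μ₃)∘μ₁ = (μ₂∘μ₁)⊕(μ₃∘μ₁). -/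
open Classical

/-!
A `[0,1]`-valued function is determined by its strict upper level sets `{x | t < μ x}` for
`0 ≤ t < 1`. Taking such a level set commutes with the suprema defining `⊕` and `∘`: the level
set of `μ ⊕ ν` is the Minkowski sum of the level sets of `μ` and `ν`, and that of `μ ∘ ν` is the
set of finite sums `Σ aᵢγᵢbᵢ` with `aᵢ`, `bᵢ` in the level sets of `μ`, `ν`. For these crisp
compositions distributivity is elementary: splitting each `bᵢ = cᵢ + dᵢ` and using `aγ(c + d) =
aγc + aγd` gives one inclusion, concatenating two representations gives the other, the latter
needing the level sets of `μ₂`, `μ₃` to contain `0`, which is where `μ₂ 0 = μ₃ 0 = 1` and `t < 1`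
enter.
-/

open GammaSemiring
open scoped Pointwise

section SetComp

variable {S : Type*} (G : Type*) [AddCommMonoid S] [AddCommMonoid G] [GammaSemiring S G]

def setComp (A B : Set S) : Set S :=
  {x | ∃ (n : ℕ) (u v : Fin (n + 1) → S) (γ : Fin (n + 1) → G),
    x = ∑ i, tmul (u i) (γ i) (v i) ∧ ∀ i, u i ∈ A ∧ v i ∈ B}

variable {G} {A A' B B' C : Set S}

lemma sum_tmul_mem_setComp {k : ℕ} (hk : k ≠ 0) (u v : Fin k → S) (γ : Fin k → G)
    (hu : ∀ i, u i ∈ A) (hv : ∀ i, v i ∈ B) :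
    ∑ i, tmul (u i) (γ i) (v i) ∈ setComp G A B := by
  obtain ⟨n, rfl⟩ := Nat.exists_eq_succ_of_ne_zero hk
  exact ⟨n, u, v, γ, rfl, fun i => ⟨hu i, hv i⟩⟩

lemma setComp_mono (hA : A ⊆ A') (hB : B ⊆ B') : setComp G A B ⊆ setComp G A' B' := by
  rintro x ⟨n, u, v, γ, hx, huv⟩
  exact ⟨n, u, v, γ, hx, fun i => ⟨hA (huv i).1, hB (huv i).2⟩⟩

lemma setComp_add_setComp_subset : setComp G A B + setComp G A B ⊆ setComp G A B := by
  rintro _ ⟨_, ⟨m, u, v, γ, rfl, huv⟩, _, ⟨n, u', v', γ', rfl, huv'⟩, rfl⟩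
  have hmem := sum_tmul_mem_setComp (A := A) (B := B) (by omega)
    (Fin.append u u') (Fin.append v v') (Fin.append γ γ')
    (Fin.addCases (fun i => by simpa using (huv i).1) (fun i => by simpa using (huv' i).1))
    (Fin.addCases (fun i => by simpa using (huv i).2) (fun i => by simpa using (huv' i).2))
  simpa only [Fin.sum_univ_add, Fin.append_left, Fin.append_right] using hmem

lemma setComp_add_right_subset : setComp G A (B + C) ⊆ setComp G A B + setComp G A C := by
  rintro x ⟨n, u, v, γ, rfl, huv⟩
  choose b hb c hc hbc using fun i => Set.mem_add.mp (huv i).2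
  refine Set.mem_add.mpr ⟨_, ⟨n, u, b, γ, rfl, fun i => ⟨(huv i).1, hb i⟩⟩,
    _, ⟨n, u, c, γ, rfl, fun i => ⟨(huv i).1, hc i⟩⟩, ?_⟩
  simp only [← Finset.sum_add_distrib, ← tmul_add, hbc]

lemma setComp_add_left_subset : setComp G (B + C) A ⊆ setComp G B A + setComp G C A := by
  rintro x ⟨n, u, v, γ, rfl, huv⟩
  choose b hb c hc hbc using fun i => Set.mem_add.mp (huv i).1
  refine Set.mem_add.mpr ⟨_, ⟨n, b, v, γ, rfl, fun i => ⟨hb i, (huv i).2⟩⟩,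
    _, ⟨n, c, v, γ, rfl, fun i => ⟨hc i, (huv i).2⟩⟩, ?_⟩
  simp only [← Finset.sum_add_distrib, ← add_tmul, hbc]

lemma setComp_add_right (hB : (0 : S) ∈ B) (hC : (0 : S) ∈ C) :
    setComp G A (B + C) = setComp G A B + setComp G A C :=
  setComp_add_right_subset.antisymm <|
    (Set.add_subset_add (setComp_mono subset_rfl (Set.subset_add_left B hC))
      (setComp_mono subset_rfl (Set.subset_add_right C hB))).trans
    setComp_add_setComp_subset

lemma setComp_add_left (hB : (0 : S) ∈ B) (hC : (0 : S) ∈ C) :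
    setComp G (B + C) A = setComp G B A + setComp G C A :=
  setComp_add_left_subset.antisymm <|
    (Set.add_subset_add (setComp_mono (Set.subset_add_left B hC) subset_rfl)
      (setComp_mono (Set.subset_add_right C hB) subset_rfl)).trans
    setComp_add_setComp_subset

end SetComp

section LevelSets

variable {S G : Type*} [AddCommMonoid S] [AddCommMonoid G] [GammaSemiring S G]
  {μ ν : S → ℝ}

lemma fSum_mem_Icc (hμ : ∀ x, μ x ∈ Set.Icc (0 : ℝ) 1) (hν : ∀ x, ν x ∈ Set.Icc (0 : ℝ) 1)
    (x : S) : fSum μ ν x ∈ Set.Icc (0 : ℝ) 1 :=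
  ⟨Real.sSup_nonneg (by rintro _ ⟨u, v, -, rfl⟩; exact le_min (hμ u).1 (hν v).1),
    Real.sSup_le (by rintro _ ⟨u, v, -, rfl⟩; exact min_le_of_left_le (hμ u).2) zero_le_one⟩

lemma fComp_mem_Icc (hμ : ∀ x, μ x ∈ Set.Icc (0 : ℝ) 1) (hν : ∀ x, ν x ∈ Set.Icc (0 : ℝ) 1)
    (x : S) : fComp S G μ ν x ∈ Set.Icc (0 : ℝ) 1 :=
  ⟨Real.sSup_nonneg (by
      rintro _ ⟨n, u, v, γ, -, rfl⟩
      exact Finset.le_inf' _ _ fun i _ => le_min (hμ _).1 (hν _).1),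
    Real.sSup_le (by
      rintro _ ⟨n, u, v, γ, -, rfl⟩
      exact (Finset.inf'_le _ (Finset.mem_univ 0)).trans (min_le_of_left_le (hμ _).2))
      zero_le_one⟩

lemma lt_sSup_iff_of_nonneg {s : Set ℝ} (hs : BddAbove s) {t : ℝ} (ht : 0 ≤ t) :
    t < sSup s ↔ ∃ r ∈ s, t < r := by
  rcases s.eq_empty_or_nonempty with rfl | hne
  · simp [ht.not_gt]
  · exact lt_csSup_iff hs hne

lemma setOf_lt_fSum (hμ : ∀ x, μ x ≤ 1) (t : ℝ) :
    {x | t < fSum μ ν x} = {x | t < μ x} + {x | t < ν x} := by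
  ext x
  change t < sSup _ ↔ _
  refine (lt_csSup_iff ⟨1, ?_⟩ ?_).trans ⟨?_, ?_⟩
  · rintro _ ⟨u, v, -, rfl⟩
    exact min_le_of_left_le (hμ u)
  · exact ⟨_, x, 0, (add_zero x).symm, rfl⟩
  · rintro ⟨_, ⟨u, v, rfl, rfl⟩, ht⟩
    exact ⟨u, (lt_min_iff.mp ht).1, v, (lt_min_iff.mp ht).2, rfl⟩
  · rintro ⟨u, hu, v, hv, rfl⟩
    exact ⟨_, ⟨u, v, rfl, rfl⟩, lt_min hu hv⟩

lemma setOf_lt_fComp (hμ : ∀ x, μ x ≤ 1) {t : ℝ} (ht : 0 ≤ t) :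
    {x | t < fComp S G μ ν x} = setComp G {x | t < μ x} {x | t < ν x} := by
  ext x
  refine (lt_sSup_iff_of_nonneg ⟨1, ?_⟩ ht).trans ⟨?_, ?_⟩
  · rintro _ ⟨n, u, v, γ, -, rfl⟩
    exact (Finset.inf'_le _ (Finset.mem_univ 0)).trans (min_le_of_left_le (hμ _))
  · rintro ⟨_, ⟨n, u, v, γ, hx, rfl⟩, htr⟩
    exact ⟨n, u, v, γ, hx, fun i => lt_min_iff.mp ((Finset.lt_inf'_iff _).mp htr i
      (Finset.mem_univ i))⟩
  · rintro ⟨n, u, v, γ, hx, huv⟩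
    exact ⟨_, ⟨n, u, v, γ, hx, rfl⟩,
      (Finset.lt_inf'_iff _).mpr fun i _ => lt_min (huv i).1 (huv i).2⟩

end LevelSets

lemma eq_of_forall_setOf_lt_eq {α : Type*} {f g : α → ℝ}
    (hf : ∀ x, f x ∈ Set.Icc (0 : ℝ) 1) (hg : ∀ x, g x ∈ Set.Icc (0 : ℝ) 1)
    (h : ∀ t ∈ Set.Ico (0 : ℝ) 1, {x | t < f x} = {x | t < g x}) : f = g := by
  funext x
  by_contra hne
  rcases lt_or_gt_of_ne hne with hlt | hlt
  · exact lt_irrefl (f x) ((Set.ext_iff.mp (h (f x) ⟨(hf x).1, hlt.trans_le (hg x).2⟩) x).mpr hlt)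
  · exact lt_irrefl (g x) ((Set.ext_iff.mp (h (g x) ⟨(hg x).1, hlt.trans_le (hf x).2⟩) x).mp hlt)

theorem fComp_distrib_fSum {S G : Type*} [AddCommMonoid S] [AddCommMonoid G]
    [GammaSemiring S G] (μ₁ μ₂ μ₃ : S → ℝ)
    (h₁ : IsFuzzyLeftIdeal S G μ₁) (h₂ : IsFuzzyLeftIdeal S G μ₂)
    (h₃ : IsFuzzyLeftIdeal S G μ₃) :
    fComp S G μ₁ (fSum μ₂ μ₃) = fSum (fComp S G μ₁ μ₂) (fComp S G μ₁ μ₃) ∧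
    fComp S G (fSum μ₂ μ₃) μ₁ = fSum (fComp S G μ₂ μ₁) (fComp S G μ₃ μ₁) := by
  obtain ⟨hμ₁, -⟩ := h₁
  obtain ⟨hμ₂, hμ₂0, -⟩ := h₂
  obtain ⟨hμ₃, hμ₃0, -⟩ := h₃
  have le_one {μ : S → ℝ} (hμ : ∀ x, μ x ∈ Set.Icc (0 : ℝ) 1) (x : S) : μ x ≤ 1 := (hμ x).2
  have hσ := fSum_mem_Icc hμ₂ hμ₃
  constructor
  · refine eq_of_forall_setOf_lt_eq (fComp_mem_Icc hμ₁ hσ)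
      (fSum_mem_Icc (fComp_mem_Icc hμ₁ hμ₂) (fComp_mem_Icc hμ₁ hμ₃)) fun t ht => ?_
    rw [setOf_lt_fComp (le_one hμ₁) ht.1, setOf_lt_fSum (le_one hμ₂),
      setOf_lt_fSum (le_one (fComp_mem_Icc hμ₁ hμ₂)), setOf_lt_fComp (le_one hμ₁) ht.1,
      setOf_lt_fComp (le_one hμ₁) ht.1]
    exact setComp_add_right (hμ₂0 ▸ ht.2 : t < μ₂ 0) (hμ₃0 ▸ ht.2 : t < μ₃ 0)
  · refine eq_of_forall_setOf_lt_eq (fComp_mem_Icc hσ hμ₁)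
      (fSum_mem_Icc (fComp_mem_Icc hμ₂ hμ₁) (fComp_mem_Icc hμ₃ hμ₁)) fun t ht => ?_
    rw [setOf_lt_fComp (le_one hσ) ht.1, setOf_lt_fSum (le_one hμ₂),
      setOf_lt_fSum (le_one (fComp_mem_Icc hμ₂ hμ₁)), setOf_lt_fComp (le_one hμ₂) ht.1,
      setOf_lt_fComp (le_one hμ₃) ht.1]
    exact setComp_add_left (hμ₂0 ▸ ht.2 : t < μ₂ 0) (hμ₃0 ▸ ht.2 : t < μ₃ 0)
end
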